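/- An H-map f : X → Y of topological spaces has shape dimension sd f ≤ n if and only if for every H-map h : Y → P into a space P belonging to HPol, the composition h ∘ f factors in HTop through a polyhedron P' with dim P' ≤ n, i.e., there are H-maps u : X → P' and v : P' → P such that h ∘ f = v ∘ u. -/

import Mathlib

universe u

noncomputable section

namespace ShapePaper

open CategoryTheory

/-! ### H-maps: morphisms of the homotopy category HTop -/

/-- The setoid of continuous maps up to homotopy. -/
def homotopySetoid (X Y : Type u) [TopologicalSpace X] [TopologicalSpace Y] :
    Setoid C(X, Y) :=
  ⟨ContinuousMap.Homotopic, ContinuousMap.Homotopic.equivalence⟩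

/-- An H-map `X → Y` is a homotopy class of continuous maps `X → Y`,
i.e. a morphism of the homotopy category `HTop`. -/
def HMap (X Y : Type u) [TopologicalSpace X] [TopologicalSpace Y] : Type u :=
  Quotient (homotopySetoid X Y)

variable {X Y Z W : Type u} [TopologicalSpace X] [TopologicalSpace Y]
  [TopologicalSpace Z] [TopologicalSpace W]

/-- The H-map (homotopy class) of a continuous map. -/
def HMap.mk (f : C(X, Y)) : HMap X Y := Quotient.mk (homotopySetoid X Y) f

/-- The identity H-map. -/
protected def HMap.id (X : Type u) [TopologicalSpace X] : HMap X X :=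
  HMap.mk (ContinuousMap.id X)

/-- Composition of H-maps. -/
protected def HMap.comp (g : HMap Y Z) (f : HMap X Y) : HMap X Z :=
  Quotient.liftOn₂ g f (fun g f => HMap.mk (g.comp f))
    (fun _ _ _ _ hg hf => Quotient.sound (ContinuousMap.Homotopic.comp hg hf))

theorem HMap.comp_assoc (h : HMap Z W) (g : HMap Y Z) (f : HMap X Y) :
    HMap.comp (HMap.comp h g) f = HMap.comp h (HMap.comp g f) := by
  induction h using Quotient.inductionOn
  induction g using Quotient.inductionOn
  induction f using Quotient.inductionOn
  rfl

theorem HMap.id_comp (f : HMap X Y) : HMap.comp (HMap.id Y) f = f := by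
  induction f using Quotient.inductionOn
  rfl

theorem HMap.comp_id (f : HMap X Y) : HMap.comp f (HMap.id X) = f := by
  induction f using Quotient.inductionOn
  rfl

/-! ### Polyhedra and the category HPol -/

/-- A realization of the space `P` as (the space of) a simplicial complex. -/
structure PolyhedralRealization (P : Type u) [TopologicalSpace P] where
  /-- the ambient topological real vector space -/
  E : Type u
  [addCommGroup : AddCommGroup E]
  [module : Module ℝ E]
  [topE : TopologicalSpace E]
  /-- the simplicial complex -/
  complex : Geometry.SimplicialComplex ℝ E
  /-- `P` is homeomorphic to the space (carrier) of the complex -/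
  homeo : P ≃ₜ complex.space

attribute [instance] PolyhedralRealization.addCommGroup PolyhedralRealization.module
  PolyhedralRealization.topE

/-- The realization has dimension `≤ n`: every simplex has at most `n + 1` vertices. -/
def PolyhedralRealization.DimLE {P : Type u} [TopologicalSpace P]
    (R : PolyhedralRealization P) (n : ℕ) : Prop :=
  ∀ s ∈ R.complex.faces, s.card ≤ n + 1

/-- `P` is a polyhedron. -/
def IsPolyhedron (P : Type u) [TopologicalSpace P] : Prop :=
  Nonempty (PolyhedralRealization P)

/-- `P` is a polyhedron of dimension `≤ n`. -/
def IsPolyhedronDimLE (P : Type u) [TopologicalSpace P] (n : ℕ) : Prop :=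
  ∃ R : PolyhedralRealization P, R.DimLE n

/-- `X` is an object of `HPol`, i.e. has the homotopy type of a polyhedron. -/
def InHPol (X : Type u) [TopologicalSpace X] : Prop :=
  ∃ (P : Type u) (_ : TopologicalSpace P), IsPolyhedron P ∧
    Nonempty (ContinuousMap.HomotopyEquiv X P)

/-- The H-map `f` factors in `HPol` through some polyhedron of dimension `≤ n`. -/
def HMap.FactorsThruPolyhedronDimLE (f : HMap X Y) (n : ℕ) : Prop :=
  ∃ (P : Type u) (_ : TopologicalSpace P), IsPolyhedronDimLE P n ∧
    ∃ (u : HMap X P) (v : HMap P Y), f = v.comp u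

/-- `X` is homotopy dominated by a polyhedron of dimension `≤ n`. -/
def DominatedByPolyhedronDimLE (X : Type u) [TopologicalSpace X] (n : ℕ) : Prop :=
  ∃ (P : Type u) (_ : TopologicalSpace P), IsPolyhedronDimLE P n ∧
    ∃ (s : HMap X P) (d : HMap P X), d.comp s = HMap.id X

/-! ### Inverse systems in HPol -/

/-- An inverse system in the category `HPol`: a directed index set `Idx`, spaces `obj i`
having the homotopy type of polyhedra, and bonding H-maps. -/
structure InverseSystem : Type (u + 1) where
  /-- the index set -/
  Idx : Type u
  [preorder : Preorder Idx]
  [idxNonempty : Nonempty Idx]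
  directed : ∀ a b : Idx, ∃ c, a ≤ c ∧ b ≤ c
  /-- the terms of the system -/
  obj : Idx → Type u
  [topObj : ∀ i, TopologicalSpace (obj i)]
  inHPol : ∀ i, InHPol (obj i)
  /-- the bonding H-maps -/
  bond : ∀ {i j : Idx}, i ≤ j → HMap (obj j) (obj i)
  bond_refl : ∀ i : Idx, bond (le_refl i) = HMap.id (obj i)
  bond_trans : ∀ {i j k : Idx} (hij : i ≤ j) (hjk : j ≤ k),
    HMap.comp (bond hij) (bond hjk) = bond (hij.trans hjk)

attribute [instance] InverseSystem.preorder InverseSystem.idxNonempty InverseSystem.topObj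

/-- A morphism of inverse systems in `HPol`. -/
structure SysMor (𝓧 𝓨 : InverseSystem.{u}) : Type u where
  /-- the index function `φ` -/
  idxMap : 𝓨.Idx → 𝓧.Idx
  /-- the H-maps `f_μ : X_{φ(μ)} → Y_μ` -/
  hmap : ∀ μ : 𝓨.Idx, HMap (𝓧.obj (idxMap μ)) (𝓨.obj μ)
  coherent : ∀ {μ μ' : 𝓨.Idx} (h : μ ≤ μ'),
    ∃ (l : 𝓧.Idx) (h₁ : idxMap μ ≤ l) (h₂ : idxMap μ' ≤ l),
      (𝓨.bond h).comp ((hmap μ').comp (𝓧.bond h₂)) = (hmap μ).comp (𝓧.bond h₁)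

variable {𝓧 𝓨 𝓩 : InverseSystem.{u}}

/-- `f_{μλ} := f_μ ∘ p_{φ(μ)λ}` for `λ ≥ φ(μ)`. -/
def SysMor.shift (F : SysMor 𝓧 𝓨) (μ : 𝓨.Idx) {l : 𝓧.Idx} (h : F.idxMap μ ≤ l) :
    HMap (𝓧.obj l) (𝓨.obj μ) :=
  (F.hmap μ).comp (𝓧.bond h)

theorem SysMor.shift_comp (F : SysMor 𝓧 𝓨) (μ : 𝓨.Idx) {l l' : 𝓧.Idx}
    (h : F.idxMap μ ≤ l) (h' : l ≤ l') :
    (F.shift μ h).comp (𝓧.bond h') = F.shift μ (h.trans h') := by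
  rw [SysMor.shift, SysMor.shift, HMap.comp_assoc, 𝓧.bond_trans]

/-- Coherence, pushed up to all larger indices. -/
theorem SysMor.coherent' (F : SysMor 𝓧 𝓨) {μ μ' : 𝓨.Idx} (h : μ ≤ μ') :
    ∃ (l : 𝓧.Idx) (h₁ : F.idxMap μ ≤ l) (h₂ : F.idxMap μ' ≤ l),
      ∀ {l' : 𝓧.Idx} (hl : l ≤ l'),
        (𝓨.bond h).comp ((F.hmap μ').comp (𝓧.bond (h₂.trans hl))) =
          (F.hmap μ).comp (𝓧.bond (h₁.trans hl)) := by
  obtain ⟨l, h₁, h₂, heq⟩ := F.coherent h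
  refine ⟨l, h₁, h₂, ?_⟩
  intro l' hl
  have := congrArg (fun t => HMap.comp t (𝓧.bond hl)) heq
  simpa only [HMap.comp_assoc, InverseSystem.bond_trans] using this

/-- The dimension of a morphism of inverse systems is `≤ n`. -/
def SysMor.DimLE (F : SysMor 𝓧 𝓨) (n : ℕ) : Prop :=
  ∀ μ : 𝓨.Idx, ∃ (l : 𝓧.Idx) (h : F.idxMap μ ≤ l),
    (F.shift μ h).FactorsThruPolyhedronDimLE n

/-- The dimension of an inverse system is `≤ n` : every term is homotopy dominated by
a polyhedron of dimension `≤ n`. -/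
def InverseSystem.DimLE (𝓧 : InverseSystem.{u}) (n : ℕ) : Prop :=
  ∀ i : 𝓧.Idx, DominatedByPolyhedronDimLE (𝓧.obj i) n

/-- Equivalence of morphisms of inverse systems. -/
def SysMor.Equiv (F G : SysMor 𝓧 𝓨) : Prop :=
  ∀ μ : 𝓨.Idx, ∃ (l : 𝓧.Idx) (h₁ : F.idxMap μ ≤ l) (h₂ : G.idxMap μ ≤ l),
    F.shift μ h₁ = G.shift μ h₂

/-- A pro-morphism (morphism of pro-HPol) is an equivalence class of morphisms
of inverse systems. -/
def ProMor (𝓧 𝓨 : InverseSystem.{u}) : Type u :=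
  Quot (@SysMor.Equiv 𝓧 𝓨)

/-- The pro-morphism represented by a morphism of inverse systems. -/
def ProMor.mk (F : SysMor 𝓧 𝓨) : ProMor 𝓧 𝓨 := Quot.mk _ F

/-- The dimension of a pro-morphism is `≤ n` if it admits a representative of
dimension `≤ n`. -/
def ProMor.DimLE (f : ProMor 𝓧 𝓨) (n : ℕ) : Prop :=
  ∃ F : SysMor 𝓧 𝓨, ProMor.mk F = f ∧ F.DimLE n

/-- The identity morphism of an inverse system. -/
def SysMor.identity (𝓧 : InverseSystem.{u}) : SysMor 𝓧 𝓧 where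
  idxMap := id
  hmap i := HMap.id (𝓧.obj i)
  coherent := by
    intro μ μ' h
    refine ⟨μ', h, le_refl _, ?_⟩
    show (𝓧.bond h).comp ((HMap.id _).comp (𝓧.bond (le_refl μ'))) =
      (HMap.id _).comp (𝓧.bond h)
    rw [HMap.id_comp, HMap.id_comp, 𝓧.bond_trans]

/-- Composition of morphisms of inverse systems. -/
def SysMor.comp (G : SysMor 𝓨 𝓩) (F : SysMor 𝓧 𝓨) : SysMor 𝓧 𝓩 where
  idxMap := F.idxMap ∘ G.idxMap
  hmap ν := (G.hmap ν).comp (F.hmap (G.idxMap ν))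
  coherent := by
    intro ν ν' h
    obtain ⟨μ, hμ₁, hμ₂, hg⟩ := G.coherent h
    obtain ⟨l₁, h₁₁, h₁₂, hf₁⟩ := F.coherent' hμ₁
    obtain ⟨l₂, h₂₁, h₂₂, hf₂⟩ := F.coherent' hμ₂
    obtain ⟨l, hl₁, hl₂⟩ := 𝓧.directed l₁ l₂
    refine ⟨l, h₁₁.trans hl₁, h₂₁.trans hl₂, ?_⟩
    have e₁ := hf₁ hl₁
    have e₂ := hf₂ hl₂
    have hg₂ := congrArg
      (fun t => HMap.comp t ((F.hmap μ).comp (𝓧.bond (h₂₂.trans hl₂)))) hg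
    simp only [HMap.comp_assoc] at hg₂ e₁ e₂ ⊢
    rw [← e₂, hg₂, ← e₁]

/-- Composition of pro-morphisms (via choice of representatives). -/
def ProMor.comp (g : ProMor 𝓨 𝓩) (f : ProMor 𝓧 𝓨) : ProMor 𝓧 𝓩 :=
  ProMor.mk ((Quot.out g).comp (Quot.out f))

/-- The identity pro-morphism. -/
protected def ProMor.id (𝓧 : InverseSystem.{u}) : ProMor 𝓧 𝓧 :=
  ProMor.mk (SysMor.identity 𝓧)

/-- `α` is an isomorphism of pro-HPol. -/
def ProMor.IsIso (α : ProMor 𝓧 𝓨) : Prop :=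
  ∃ β : ProMor 𝓨 𝓧, β.comp α = ProMor.id 𝓧 ∧ α.comp β = ProMor.id 𝓨

/-! ### Restriction to a cofinal subset -/

/-- The subsystem of `𝓨` determined by a cofinal subset `S` of the index set. -/
def InverseSystem.restrict (𝓨 : InverseSystem.{u}) (S : Set 𝓨.Idx)
    (hcof : ∀ μ : 𝓨.Idx, ∃ μ' ∈ S, μ ≤ μ') : InverseSystem.{u} where
  Idx := ↥S
  idxNonempty := by
    obtain ⟨μ⟩ := 𝓨.idxNonempty
    obtain ⟨μ', hs, -⟩ := hcof μ
    exact ⟨⟨μ', hs⟩⟩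
  directed a b := by
    obtain ⟨c, hac, hbc⟩ := 𝓨.directed a b
    obtain ⟨c', hs, hcc'⟩ := hcof c
    exact ⟨⟨c', hs⟩, Subtype.coe_le_coe.mp (le_trans hac hcc'),
      Subtype.coe_le_coe.mp (le_trans hbc hcc')⟩
  obj i := 𝓨.obj i
  topObj i := 𝓨.topObj i
  inHPol i := 𝓨.inHPol i
  bond h := 𝓨.bond h
  bond_refl i := 𝓨.bond_refl i
  bond_trans h₁ h₂ := 𝓨.bond_trans h₁ h₂

/-- The morphism induced by `F : 𝓧 → 𝓨` and the inclusion of a cofinal subset of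
the index set of `𝓨`. -/
def SysMor.restrict (F : SysMor 𝓧 𝓨) (S : Set 𝓨.Idx)
    (hcof : ∀ μ : 𝓨.Idx, ∃ μ' ∈ S, μ ≤ μ') : SysMor 𝓧 (𝓨.restrict S hcof) where
  idxMap μ := F.idxMap μ.val
  hmap μ := F.hmap μ.val
  coherent := by
    intro μ μ' h
    exact F.coherent h

/-! ### Expansions and shape dimension -/

/-- An `HPol`-expansion of the topological space `X`. -/
structure Expansion (X : Type u) [TopologicalSpace X] (𝓧 : InverseSystem.{u}) where
  /-- the projection H-maps `p_λ : X → X_λ` -/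
  proj : ∀ l : 𝓧.Idx, HMap X (𝓧.obj l)
  proj_bond : ∀ {l l' : 𝓧.Idx} (h : l ≤ l'), (𝓧.bond h).comp (proj l') = proj l
  /-- every H-map into a space of `HPol` factors through some term of the system -/
  factors : ∀ (P : Type u) [TopologicalSpace P], InHPol P → ∀ f : HMap X P,
    ∃ (l : 𝓧.Idx) (g : HMap (𝓧.obj l) P), g.comp (proj l) = f
  /-- the factorization is unique after passing to a larger index -/
  factors_unique : ∀ (P : Type u) [TopologicalSpace P], InHPol P →
    ∀ (l : 𝓧.Idx) (g g' : HMap (𝓧.obj l) P), g.comp (proj l) = g'.comp (proj l) →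
      ∃ (l' : 𝓧.Idx) (h : l ≤ l'), g.comp (𝓧.bond h) = g'.comp (𝓧.bond h)

/-- The shape dimension of a topological space is `≤ n`: `X` admits an
`HPol`-expansion all of whose terms are homotopy dominated by polyhedra of
dimension `≤ n`. -/
def ShapeDimLE (X : Type u) [TopologicalSpace X] (n : ℕ) : Prop :=
  ∃ (𝓧 : InverseSystem.{u}) (_ : Expansion X 𝓧), 𝓧.DimLE n

/-- The morphism of inverse systems `F` represents the H-map `f` with respect to the
expansions `pX` and `pY`, i.e. `q_μ ∘ f = f_μ ∘ p_{φ(μ)}` for all `μ`. -/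
def Represents {X Y : Type u} [TopologicalSpace X] [TopologicalSpace Y]
    {𝓧 𝓨 : InverseSystem.{u}} (pX : Expansion X 𝓧) (pY : Expansion Y 𝓨)
    (f : HMap X Y) (F : SysMor 𝓧 𝓨) : Prop :=
  ∀ μ : 𝓨.Idx, (F.hmap μ).comp (pX.proj (F.idxMap μ)) = (pY.proj μ).comp f

/-- The shape dimension of an H-map `f : X → Y` is `≤ n`: the shape morphism
induced by `f` admits a representation by a pro-morphism of dimension `≤ n`. -/
def HMapShapeDimLE {X Y : Type u} [TopologicalSpace X] [TopologicalSpace Y]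
    (f : HMap X Y) (n : ℕ) : Prop :=
  ∃ (𝓧 𝓨 : InverseSystem.{u}) (pX : Expansion X 𝓧) (pY : Expansion Y 𝓨)
    (F : SysMor 𝓧 𝓨), Represents pX pY f F ∧ (ProMor.mk F).DimLE n

/-- The shape dimension of a space, as an extended natural number. -/
def shapeDim (X : Type u) [TopologicalSpace X] : ℕ∞ :=
  sInf {n : ℕ∞ | ∃ m : ℕ, n = (m : ℕ∞) ∧ ShapeDimLE X m}

/-- The shape dimension of an H-map, as an extended natural number. -/
def hmapShapeDim {X Y : Type u} [TopologicalSpace X] [TopologicalSpace Y]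
    (f : HMap X Y) : ℕ∞ :=
  sInf {n : ℕ∞ | ∃ m : ℕ, n = (m : ℕ∞) ∧ HMapShapeDimLE f m}

end ShapePaper

/-!
Both directions rest on the expansion property. An H-map `h : Y → P` into `HPol` factors as
`g ∘ q_μ`, so `h ∘ f = g ∘ f_{μλ} ∘ p_λ` inherits any factorization of `f_{μλ}`. Conversely, if
`q_μ ∘ f = v ∘ u` through a polyhedron `P'`, then `u = w ∘ p_λ`, and the uniqueness part of the
expansion property of `p` turns `v ∘ w ∘ p_λ = f_{μλ} ∘ p_λ` into `f_{μλ'} = v ∘ w ∘ p_{λλ'}` for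
some `λ' ≥ λ`. Since the dimension of a morphism of systems is invariant under equivalence, the
pro-morphism may be replaced by its representative `F`.
-/

namespace ShapePaper

section FactorsThru

variable {X Y Z : Type u} [TopologicalSpace X] [TopologicalSpace Y] [TopologicalSpace Z]
  {n : ℕ}

theorem HMap.FactorsThruPolyhedronDimLE.comp_right {g : HMap Y Z}
    (hg : g.FactorsThruPolyhedronDimLE n) (f : HMap X Y) :
    (g.comp f).FactorsThruPolyhedronDimLE n := by
  obtain ⟨P, _, hP, u, v, rfl⟩ := hg
  exact ⟨P, _, hP, u.comp f, v, HMap.comp_assoc v u f⟩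

theorem HMap.FactorsThruPolyhedronDimLE.comp_left {f : HMap X Y}
    (hf : f.FactorsThruPolyhedronDimLE n) (g : HMap Y Z) :
    (g.comp f).FactorsThruPolyhedronDimLE n := by
  obtain ⟨P, _, hP, u, v, rfl⟩ := hf
  exact ⟨P, _, hP, u, g.comp v, (HMap.comp_assoc g v u).symm⟩

end FactorsThru

theorem IsPolyhedronDimLE.inHPol {P : Type u} [TopologicalSpace P] {n : ℕ}
    (h : IsPolyhedronDimLE P n) : InHPol P :=
  let ⟨R, _⟩ := h
  ⟨P, _, ⟨R⟩, ⟨ContinuousMap.HomotopyEquiv.refl P⟩⟩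

section Systems

variable {𝓧 𝓨 : InverseSystem.{u}}

theorem SysMor.shift_eq_shift_of_le {F G : SysMor 𝓧 𝓨} {μ : 𝓨.Idx} {l l' : 𝓧.Idx}
    {h₁ : F.idxMap μ ≤ l} {h₂ : G.idxMap μ ≤ l} (heq : F.shift μ h₁ = G.shift μ h₂)
    (hl : l ≤ l') : F.shift μ (h₁.trans hl) = G.shift μ (h₂.trans hl) := by
  rw [← F.shift_comp μ h₁ hl, ← G.shift_comp μ h₂ hl, heq]

theorem SysMor.Equiv.equivalence : Equivalence (@SysMor.Equiv 𝓧 𝓨) where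
  refl F μ := ⟨F.idxMap μ, le_rfl, le_rfl, rfl⟩
  symm h μ := let ⟨l, h₁, h₂, heq⟩ := h μ; ⟨l, h₂, h₁, heq.symm⟩
  trans {F G H} hFG hGH μ := by
    obtain ⟨l₁, a₁, a₂, e₁⟩ := hFG μ
    obtain ⟨l₂, b₁, b₂, e₂⟩ := hGH μ
    obtain ⟨l, hl₁, hl₂⟩ := 𝓧.directed l₁ l₂
    refine ⟨l, a₁.trans hl₁, b₂.trans hl₂, ?_⟩
    calc F.shift μ (a₁.trans hl₁) = G.shift μ (a₂.trans hl₁) := shift_eq_shift_of_le e₁ hl₁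
      _ = H.shift μ (b₂.trans hl₂) := shift_eq_shift_of_le e₂ hl₂

theorem SysMor.DimLE.of_equiv {F G : SysMor 𝓧 𝓨} {n : ℕ} (hG : G.DimLE n)
    (hGF : G.Equiv F) : F.DimLE n := by
  intro μ
  obtain ⟨l₁, h₁, hfac⟩ := hG μ
  obtain ⟨l₂, hG₂, hF₂, heq⟩ := hGF μ
  obtain ⟨l, hl₁, hl₂⟩ := 𝓧.directed l₁ l₂
  refine ⟨l, hF₂.trans hl₂, ?_⟩
  rw [← shift_eq_shift_of_le heq hl₂, ← G.shift_comp μ h₁ hl₁]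
  exact hfac.comp_right _

theorem ProMor.dimLE_mk_iff (F : SysMor 𝓧 𝓨) (n : ℕ) :
    (ProMor.mk F).DimLE n ↔ F.DimLE n := by
  refine ⟨fun ⟨G, hGF, hG⟩ => hG.of_equiv ?_, fun hF => ⟨F, rfl, hF⟩⟩
  exact SysMor.Equiv.equivalence.eqvGen_iff.mp (Quot.eq.mp hGF)

end Systems

section Expansions

variable {X Y : Type u} [TopologicalSpace X] [TopologicalSpace Y] {𝓧 𝓨 : InverseSystem.{u}}
  {pX : Expansion X 𝓧} {pY : Expansion Y 𝓨} {f : HMap X Y} {F : SysMor 𝓧 𝓨} {n : ℕ}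

theorem Represents.shift_comp_proj (hrep : Represents pX pY f F) (μ : 𝓨.Idx) {l : 𝓧.Idx}
    (h : F.idxMap μ ≤ l) : (F.shift μ h).comp (pX.proj l) = (pY.proj μ).comp f := by
  rw [SysMor.shift, HMap.comp_assoc, pX.proj_bond, hrep μ]

theorem Represents.factorsThru_of_dimLE (hrep : Represents pX pY f F) (hF : F.DimLE n)
    (P : Type u) [TopologicalSpace P] (hP : InHPol P) (h : HMap Y P) :
    (h.comp f).FactorsThruPolyhedronDimLE n := by
  obtain ⟨μ, g, rfl⟩ := pY.factors P hP h
  obtain ⟨l, hl, hfac⟩ := hF μ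
  rw [HMap.comp_assoc, ← hrep.shift_comp_proj μ hl]
  exact (hfac.comp_right _).comp_left g

theorem Represents.dimLE_of_factorsThru (hrep : Represents pX pY f F)
    (hfac : ∀ μ : 𝓨.Idx, ((pY.proj μ).comp f).FactorsThruPolyhedronDimLE n) :
    F.DimLE n := by
  intro μ
  obtain ⟨P, _, hP, u, v, huv⟩ := hfac μ
  obtain ⟨l, w, rfl⟩ := pX.factors P hP.inHPol u
  obtain ⟨l₀, hl, hφ⟩ := 𝓧.directed l (F.idxMap μ)
  have hagree : ((v.comp w).comp (𝓧.bond hl)).comp (pX.proj l₀) =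
      (F.shift μ hφ).comp (pX.proj l₀) := by
    rw [hrep.shift_comp_proj, huv, HMap.comp_assoc, pX.proj_bond, HMap.comp_assoc]
  obtain ⟨l₁, hl₁, heq⟩ := pX.factors_unique _ (𝓨.inHPol μ) l₀ _ _ hagree
  refine ⟨l₁, hφ.trans hl₁, P, _, hP, (w.comp (𝓧.bond hl)).comp (𝓧.bond hl₁), v, ?_⟩
  rw [← F.shift_comp μ hφ hl₁, ← heq]
  simp only [HMap.comp_assoc]

end Expansions

/-- **Theorem 3.3.** An H-map `f : X → Y` (inducing, with respect to HPol-expansions of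
`X` and `Y`, the morphism of inverse systems `F`) has shape dimension `sd f ≤ n` if
and only if for every H-map `h : Y → P` into a space `P ∈ HPol`, the composition
`h ∘ f` factors in HTop through a polyhedron `P'` with `dim P' ≤ n`, i.e. there are
H-maps `u : X → P'` and `v : P' → P` such that `h ∘ f = v ∘ u`. -/
theorem hmap_sdLE_iff_factorization (X Y : Type u)
    [TopologicalSpace X] [TopologicalSpace Y]
    (𝓧 𝓨 : InverseSystem.{u}) (pX : Expansion X 𝓧) (pY : Expansion Y 𝓨)
    (f : HMap X Y) (F : SysMor 𝓧 𝓨) (hrep : Represents pX pY f F) (n : ℕ) :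
    (ProMor.mk F).DimLE n ↔
      ∀ (P : Type u) (_ : TopologicalSpace P), InHPol P → ∀ h : HMap Y P,
        (h.comp f).FactorsThruPolyhedronDimLE n := by
  rw [ProMor.dimLE_mk_iff]
  exact ⟨fun hF P _ => hrep.factorsThru_of_dimLE hF P,
    fun hfac => hrep.dimLE_of_factorsThru fun μ => hfac _ _ (𝓨.inHPol μ) (pY.proj μ)⟩

end ShapePaper
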